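/- arXiv:2203.07606 — 2 statements merged into one kernel-verified Lean document; each statement's English description precedes it below -/
import Mathlib

section
/- Let p be a prime number, let t be a positive integer, and let k_1, …, k_t and w_1, …, w_t be positive integers such that p does not divide k_j for any j. Suppose that p divides the numerator of the rational number ∑_{j=1}^t k_j / w_j (written in lowest terms). Then there exist integers φ_1, …, φ_t with φ_j ≡ 1 (mod p) for every j such that ∑_{j=1}^t k_j · φ_j / w_j = 0 in ℚ. -/
/-!
Write `S = ∑ j, k j / w j = a / b` and `k₀ / w₀ = c / d` in lowest terms: `p ∣ a` forces `p ∤ b`, and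
`p ∤ c` because `c ∣ k₀`. Pick `N = c b u ≡ 1 (mod p)`. Then `N S = c a u = (c / d) M` with
`M = a d u ≡ 0 (mod p)`, so `φ_j = N` for `j ≠ 0` and `φ₀ = N - M` make the weighted sum vanish.
-/

theorem Int.exists_mul_modEq_one_of_not_dvd {p : ℕ} (hp : p.Prime) {n : ℤ}
    (h : ¬ (p : ℤ) ∣ n) : ∃ u, n * u ≡ 1 [ZMOD p] := by
  obtain ⟨a, u, hau⟩ := (Nat.prime_iff_prime_int.mp hp).coprime_iff_not_dvd.2 h
  exact ⟨u, Int.modEq_iff_dvd.2 ⟨a, by linarith⟩⟩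

theorem Rat.not_dvd_den_of_dvd_num {q : ℚ} {p : ℕ} (hp : p ≠ 1) (h : (p : ℤ) ∣ q.num) :
    ¬ p ∣ q.den := fun hden =>
  hp (Nat.eq_one_of_dvd_coprimes q.reduced (Int.natCast_dvd.1 h) hden)

theorem Rat.num_intCast_div_dvd (a : ℤ) {b : ℤ} (hb : b ≠ 0) : ((a : ℚ) / b).num ∣ a := by
  rw [← Rat.divInt_eq_div]
  exact Rat.num_dvd a hb

theorem Rat.num_mul_den_mul_comm (q r : ℚ) :
    (q.num * r.den : ℚ) * r = (r.num * q.den : ℚ) * q := by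
  rw [mul_assoc, mul_assoc, mul_comm (r.den : ℚ), mul_comm (q.den : ℚ), Rat.mul_den_eq_num,
    Rat.mul_den_eq_num, mul_comm]

theorem Rat.exists_modEq_one_sum_mul_eq_zero {ι : Type*} [Fintype ι] [DecidableEq ι]
    {p : ℕ} (hp : p.Prime) (c : ι → ℚ) (i : ι) (hci : ¬ (p : ℤ) ∣ (c i).num)
    (hsum : (p : ℤ) ∣ (∑ j, c j).num) :
    ∃ φ : ι → ℤ, (∀ j, φ j ≡ 1 [ZMOD p]) ∧ ∑ j, c j * φ j = 0 := by
  set S := ∑ j, c j with hS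
  have hden : ¬ (p : ℤ) ∣ S.den :=
    Int.natCast_dvd_natCast.not.2 (Rat.not_dvd_den_of_dvd_num hp.ne_one hsum)
  obtain ⟨u, hu⟩ := Int.exists_mul_modEq_one_of_not_dvd hp (n := (c i).num * S.den)
    fun h => ((Nat.prime_iff_prime_int.mp hp).dvd_or_dvd h).elim hci hden
  set N := (c i).num * S.den * u
  set M := S.num * (c i).den * u
  have hM : M ≡ 0 [ZMOD p] := by
    simpa [M, mul_assoc] using (Int.modEq_zero_iff_dvd.2 hsum).mul_right ((c i).den * u)
  refine ⟨fun j => N - if j = i then M else 0, fun j => ?_, ?_⟩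
  · dsimp only
    split_ifs
    · simpa using hu.sub hM
    · simpa using hu
  · have key : (N : ℚ) * S = c i * M := by
      simp only [N, M, Int.cast_mul, Int.cast_natCast]
      linear_combination (u : ℚ) * Rat.num_mul_den_mul_comm (c i) S
    calc ∑ j, c j * ((N - if j = i then M else 0 : ℤ) : ℚ)
        = (∑ j, c j) * N - c i * M := by
          simp only [Int.cast_sub, apply_ite Int.cast, Int.cast_zero, mul_sub, mul_ite, mul_zero,
            Finset.sum_sub_distrib, Finset.sum_ite_eq', Finset.mem_univ, if_true, Finset.sum_mul]
      _ = 0 := by rw [← hS, mul_comm, key, sub_self]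

theorem exists_cong_one_sum_eq_zero_general
    (p : ℕ) (hp : p.Prime) (t : ℕ) (ht : 0 < t)
    (k w : Fin t → ℕ) (hw : ∀ j, 0 < w j)
    (hpk : ∀ j, ¬ (p ∣ k j))
    (hnum : (p : ℤ) ∣ (∑ j, (k j : ℚ) / (w j : ℚ)).num) :
    ∃ φ : Fin t → ℤ, (∀ j, φ j ≡ 1 [ZMOD (p : ℤ)]) ∧
      ∑ j, (k j : ℚ) * (φ j : ℚ) / (w j : ℚ) = 0 := by
  let i₀ : Fin t := ⟨0, ht⟩
  have hnum₀ : ¬ (p : ℤ) ∣ ((k i₀ : ℚ) / (w i₀ : ℚ)).num := fun h => by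
    have hdvd := Rat.num_intCast_div_dvd (k i₀ : ℤ) (b := w i₀) (by exact_mod_cast (hw i₀).ne')
    push_cast at hdvd
    exact hpk i₀ (Int.natCast_dvd_natCast.1 (h.trans hdvd))
  obtain ⟨φ, hφ, hsum⟩ := Rat.exists_modEq_one_sum_mul_eq_zero hp _ i₀ hnum₀ hnum
  exact ⟨φ, hφ, by simpa only [div_mul_eq_mul_div] using hsum⟩

/-- If `p` is a prime not dividing any of the positive integers `k j`, and `p`
divides the numerator (in lowest terms) of `∑ j, k j / w j`, then there are integers `φ j`
congruent to `1` mod `p` with `∑ j, k j * φ j / w j = 0` in `ℚ`. -/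
theorem exists_cong_one_sum_eq_zero
    (p : ℕ) (hp : p.Prime) (t : ℕ) (ht : 0 < t)
    (k w : Fin t → ℕ) (hk : ∀ j, 0 < k j) (hw : ∀ j, 0 < w j)
    (hpk : ∀ j, ¬ (p ∣ k j))
    (hnum : (p : ℤ) ∣ (∑ j, (k j : ℚ) / (w j : ℚ)).num) :
    ∃ φ : Fin t → ℤ, (∀ j, φ j ≡ 1 [ZMOD (p : ℤ)]) ∧
      ∑ j, (k j : ℚ) * (φ j : ℚ) / (w j : ℚ) = 0 :=
  exists_cong_one_sum_eq_zero_general p hp t ht k w hw hpk hnum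
end

section
/- Let S₁ and S₂ be disjoint finite sets of odd prime numbers with S := S₁ ∪ S₂ nonempty, and set M = ∏_{p ∈ S} p². Then the number of integers m with 1 ≤ m ≤ M satisfying: (i) for every p ∈ S₁, the Legendre symbol (m/p) ≠ 1 and, if p ∣ m, then p² ∤ m; and (ii) for every p ∈ S₂, the Legendre symbol (m/p) ≠ −1 and, if p ∣ m, then p² ∤ m; is exactly ∏_{p ∈ S} (p−1)(p+2)/2. -/
open Finset

/-- The Legendre symbol `(a/p)`, extended by `0` to non-prime `p`. -/
def legSym (p : ℕ) (a : ℤ) : ℤ :=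
  if hp : p.Prime then @legendreSym p ⟨hp⟩ a else 0

lemma legSym_congr (p : ℕ) {a b : ℕ} (h : a ≡ b [MOD p]) :
    legSym p (a : ℤ) = legSym p (b : ℤ) := by
  unfold legSym
  split
  · next hp =>
    haveI : Fact p.Prime := ⟨hp⟩
    unfold legendreSym
    congr 1
    push_cast
    exact (ZMod.natCast_eq_natCast_iff a b p).mpr h
  · rfl

lemma legSym_eq_char (p : ℕ) [hp : Fact p.Prime] (a : ℕ) :
    legSym p (a : ℤ) = quadraticChar (ZMod p) (a : ZMod p) := by
  unfold legSym
  rw [dif_pos hp.out]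
  unfold legendreSym
  congr 1
  push_cast
  rfl

lemma card_char_ne (p : ℕ) [Fact p.Prime] (hp2 : p ≠ 2) (ε : ℤ) (hε : ε = 1 ∨ ε = -1) :
    (univ.filter fun a : ZMod p => quadraticChar (ZMod p) a ≠ ε).card = (p + 1) / 2 := by
  classical
  have hchar : ringChar (ZMod p) ≠ 2 := by
    rw [ZMod.ringChar_zmod_n]; exact hp2
  have hodd : p % 2 = 1 :=
    Nat.odd_iff.mp ((Fact.out : p.Prime).odd_of_ne_two hp2)
  set A := univ.filter fun a : ZMod p => quadraticChar (ZMod p) a = 1 with hA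
  set B := univ.filter fun a : ZMod p => quadraticChar (ZMod p) a = -1 with hB
  set C1 := univ.filter fun a : ZMod p => ¬ quadraticChar (ZMod p) a = 1 with hC1
  set C2 := univ.filter fun a : ZMod p => ¬ quadraticChar (ZMod p) a = -1 with hC2
  have hcard : Fintype.card (ZMod p) = p := ZMod.card p
  have h1 : A.card + C1.card = p := by
    rw [hA, hC1, Finset.card_filter_add_card_filter_not, card_univ, hcard]
  have h2 : B.card + C2.card = p := by
    rw [hB, hC2, Finset.card_filter_add_card_filter_not, card_univ, hcard]
  -- C1 = B ∪ {0}
  have hC1B : C1.filter (fun a => quadraticChar (ZMod p) a = -1) = B := by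
    ext a
    simp only [hC1, hB, mem_filter, mem_univ, true_and, and_iff_right_iff_imp]
    intro h h1
    rw [h1] at h; exact absurd h (by decide)
  have hC1z : C1.filter (fun a => ¬ quadraticChar (ZMod p) a = -1) = {0} := by
    ext a
    simp only [hC1, mem_filter, mem_univ, true_and, Finset.mem_singleton]
    constructor
    · rintro ⟨ha1, ha2⟩
      by_contra h0
      rcases quadraticChar_dichotomy h0 with h | h
      · exact ha1 h
      · exact ha2 h
    · rintro rfl
      simp
  have hC1card : C1.card = B.card + 1 := by
    rw [← Finset.card_filter_add_card_filter_not
      (s := C1) (p := fun a => quadraticChar (ZMod p) a = -1), hC1B, hC1z]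
    simp
  -- sum: A.card = B.card
  have hsum : ∑ a : ZMod p, quadraticChar (ZMod p) a = 0 := quadraticChar_sum_zero hchar
  have hAB : (A.card : ℤ) = B.card := by
    rw [← Finset.sum_filter_add_sum_filter_not univ
      (fun a => quadraticChar (ZMod p) a = 1) (fun a => (quadraticChar (ZMod p) a : ℤ))] at hsum
    rw [← Finset.sum_filter_add_sum_filter_not (univ.filter fun a : ZMod p => ¬ quadraticChar (ZMod p) a = 1)
      (fun a => quadraticChar (ZMod p) a = -1) (fun a => (quadraticChar (ZMod p) a : ℤ))] at hsum
    rw [Finset.sum_congr rfl (fun a ha => (mem_filter.mp ha).2),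
      Finset.sum_congr (hC1B) (fun a ha => (mem_filter.mp ha).2),
      Finset.sum_congr (hC1z) (fun a _ => rfl)] at hsum
    simp only [Finset.sum_const, Finset.sum_singleton, quadraticChar_zero, add_zero] at hsum
    rw [← hA] at hsum
    simp only [nsmul_eq_mul, mul_one, mul_neg] at hsum
    omega
  rcases hε with rfl | rfl
  · show C1.card = (p + 1) / 2
    omega
  · show C2.card = (p + 1) / 2
    omega

lemma card_admissible_local (p : ℕ) (hp : p.Prime) (hp2 : p ≠ 2) (ε : ℤ) (hε : ε = 1 ∨ ε = -1) :
    Nat.card {y : ZMod (p ^ 2) // legSym p (y.val : ℤ) ≠ ε ∧ y ≠ 0}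
      = (p - 1) * (p + 2) / 2 := by
  classical
  haveI : Fact p.Prime := ⟨hp⟩
  haveI : NeZero (p ^ 2) := ⟨pow_ne_zero 2 hp.pos.ne'⟩
  set χ := quadraticChar (ZMod p) with hχ
  -- the mixed-radix bijection
  set g : ZMod p × ZMod p → ZMod (p ^ 2) :=
    fun ab => ((ab.1.val + p * ab.2.val : ℕ) : ZMod (p ^ 2)) with hg
  have hlt : ∀ ab : ZMod p × ZMod p, ab.1.val + p * ab.2.val < p ^ 2 := by
    intro ab
    have h1 : ab.1.val < p := ZMod.val_lt ab.1
    have h2 : ab.2.val < p := ZMod.val_lt ab.2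
    have : p * ab.2.val + p ≤ p * p := by nlinarith
    rw [pow_two]; omega
  have hval : ∀ ab : ZMod p × ZMod p, (g ab).val = ab.1.val + p * ab.2.val := by
    intro ab; rw [hg]; exact ZMod.val_cast_of_lt (hlt ab)
  have hinj : Function.Injective g := by
    intro ab ab' h
    have h' : ab.1.val + p * ab.2.val = ab'.1.val + p * ab'.2.val := by
      rw [← hval ab, ← hval ab', h]
    have e1 : ab.1.val = ab'.1.val := by
      have := congrArg (· % p) h'
      simpa [Nat.add_mul_mod_self_left, Nat.mod_eq_of_lt (ZMod.val_lt ab.1),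
        Nat.mod_eq_of_lt (ZMod.val_lt ab'.1)] using this
    have e2 : ab.2.val = ab'.2.val := by
      have : p * ab.2.val = p * ab'.2.val := by omega
      exact Nat.eq_of_mul_eq_mul_left hp.pos this
    exact Prod.ext (ZMod.val_injective p e1) (ZMod.val_injective p e2)
  have hbij : Function.Bijective g := by
    rw [Fintype.bijective_iff_injective_and_card]
    refine ⟨hinj, ?_⟩
    simp [ZMod.card, pow_two]
  set G := Equiv.ofBijective g hbij with hG
  have step1 : Nat.card {y : ZMod (p ^ 2) // legSym p (y.val : ℤ) ≠ ε ∧ y ≠ 0}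
      = Nat.card {ab : ZMod p × ZMod p // legSym p ((g ab).val : ℤ) ≠ ε ∧ g ab ≠ 0} :=
    Nat.card_congr (Equiv.subtypeEquiv G (fun _ => Iff.rfl)).symm
  have hcond : ∀ ab : ZMod p × ZMod p,
      (legSym p ((g ab).val : ℤ) ≠ ε ∧ g ab ≠ 0) ↔ (χ ab.1 ≠ ε ∧ ab ≠ 0) := by
    intro ab
    have hmod : (ab.1.val + p * ab.2.val) ≡ ab.1.val [MOD p] :=
      Nat.add_mul_mod_self_left ab.1.val p ab.2.val
    have hleg : legSym p ((g ab).val : ℤ) = χ ab.1 := by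
      rw [hval, legSym_congr p hmod, legSym_eq_char, ZMod.natCast_val, ZMod.cast_id]
    have hz : g ab = 0 ↔ ab = 0 := by
      rw [← ZMod.val_eq_zero, hval]
      have := hp.pos
      constructor
      · intro h
        have h1 : ab.1.val = 0 ∧ ab.2.val = 0 := by
          constructor
          · omega
          · by_contra hb
            have : 1 ≤ ab.2.val := Nat.one_le_iff_ne_zero.mpr hb
            nlinarith
        exact Prod.ext (ZMod.val_injective p (by simp [h1.1]))
          (ZMod.val_injective p (by simp [h1.2]))
      · rintro rfl; simp
    rw [hleg]
    exact and_congr Iff.rfl (not_congr hz)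
  have step2 : Nat.card {ab : ZMod p × ZMod p // legSym p ((g ab).val : ℤ) ≠ ε ∧ g ab ≠ 0}
      = Nat.card {ab : ZMod p × ZMod p // χ ab.1 ≠ ε ∧ ab ≠ 0} :=
    Nat.card_congr (Equiv.subtypeEquiv (Equiv.refl _) (fun ab => by simpa using hcond ab))
  rw [step1, step2, Nat.card_eq_fintype_card, Fintype.card_subtype]
  have hz : χ (0 : ZMod p) ≠ ε := by
    rcases hε with rfl | rfl <;> simp [hχ]
  have hfil : univ.filter (fun ab : ZMod p × ZMod p => χ ab.1 ≠ ε ∧ ab ≠ 0)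
      = (univ.filter (fun ab : ZMod p × ZMod p => χ ab.1 ≠ ε)) \ {0} := by
    ext ab; simp [and_comm]
  have hprod : univ.filter (fun ab : ZMod p × ZMod p => χ ab.1 ≠ ε)
      = (univ.filter fun a : ZMod p => χ a ≠ ε) ×ˢ univ := by
    ext ab; simp [Finset.mem_product]
  have hmem : (0 : ZMod p × ZMod p) ∈ univ.filter (fun ab : ZMod p × ZMod p => χ ab.1 ≠ ε) := by
    simp [hz]
  rw [hfil, Finset.card_sdiff_of_subset (by simpa using hmem), hprod, Finset.card_product,
    Finset.card_singleton, card_univ, ZMod.card, card_char_ne p hp2 ε hε]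
  -- arithmetic
  obtain ⟨k, rfl⟩ : ∃ k, p = 2 * k + 1 := by
    have := Nat.odd_iff.mp (hp.odd_of_ne_two hp2)
    exact ⟨p / 2, by omega⟩
  have e1 : (2 * k + 1 + 1) / 2 = k + 1 := by omega
  have e2 : (2 * k + 1 - 1) * (2 * k + 1 + 2) = 2 * (k * (2 * k + 3)) := by
    have : 2 * k + 1 - 1 = 2 * k := by omega
    rw [this]; ring
  have e3 : (k + 1) * (2 * k + 1) = k * (2 * k + 3) + 1 := by ring
  rw [e1, e2, e3, Nat.add_sub_cancel, Nat.mul_div_cancel_left _ (by norm_num : 0 < 2)]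

lemma sq_dvd_congr (p : ℕ) {M : ℕ} (hpM : p ^ 2 ∣ M) {a b : ℕ} (h : a ≡ b [MOD M]) :
    p ^ 2 ∣ a ↔ p ^ 2 ∣ b := by
  have h2 : a ≡ b [MOD p ^ 2] := h.of_dvd hpM
  rw [← Nat.modEq_zero_iff_dvd, ← Nat.modEq_zero_iff_dvd]
  exact ⟨fun h1 => h2.symm.trans h1, fun h1 => h2.trans h1⟩

/-- for disjoint finite sets `S₁`, `S₂` of odd primes with union `S` nonempty and
`M = ∏_{p ∈ S} p²`, the number of `1 ≤ m ≤ M` that are non-split (Legendre symbol `≠ 1`) at all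
`p ∈ S₁`, non-inert (Legendre symbol `≠ -1`) at all `p ∈ S₂`, and not divisible by `p²` for any
`p ∈ S` dividing `m`, equals `∏_{p ∈ S} (p-1)(p+2)/2`. -/
theorem count_admissible_residues
    (S₁ S₂ : Finset ℕ) (h₁ : ∀ p ∈ S₁, p.Prime ∧ p ≠ 2) (h₂ : ∀ p ∈ S₂, p.Prime ∧ p ≠ 2)
    (hdisj : Disjoint S₁ S₂) (hne : (S₁ ∪ S₂).Nonempty) :
    Nat.card {m : ℕ | 1 ≤ m ∧ m ≤ (∏ p ∈ S₁ ∪ S₂, p ^ 2) ∧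
        (∀ p ∈ S₁, legSym p (m : ℤ) ≠ 1 ∧ (p ∣ m → ¬ p ^ 2 ∣ m)) ∧
        (∀ p ∈ S₂, legSym p (m : ℤ) ≠ -1 ∧ (p ∣ m → ¬ p ^ 2 ∣ m))} =
      ∏ p ∈ S₁ ∪ S₂, (p - 1) * (p + 2) / 2 := by
  classical
  set S := S₁ ∪ S₂ with hS
  have hP : ∀ p ∈ S, p.Prime ∧ p ≠ 2 := by
    intro p hp
    rcases Finset.mem_union.mp hp with h | h
    · exact h₁ p h
    · exact h₂ p h
  set M := ∏ p ∈ S, p ^ 2 with hM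
  have hMpos : 0 < M := Finset.prod_pos fun p hp => pow_pos (hP p hp).1.pos 2
  haveI : NeZero M := ⟨hMpos.ne'⟩
  have hdvd : ∀ p ∈ S, p ^ 2 ∣ M := fun p hp => Finset.dvd_prod_of_mem _ hp
  set ε : ℕ → ℤ := fun p => if p ∈ S₁ then 1 else -1 with hε
  have hεval : ∀ p ∈ S, ε p = 1 ∨ ε p = -1 := by
    intro p _; by_cases h : p ∈ S₁ <;> simp [hε, h]
  -- uniform condition
  have hPiff : ∀ m : ℕ,
      ((∀ p ∈ S₁, legSym p (m : ℤ) ≠ 1 ∧ (p ∣ m → ¬ p ^ 2 ∣ m)) ∧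
       (∀ p ∈ S₂, legSym p (m : ℤ) ≠ -1 ∧ (p ∣ m → ¬ p ^ 2 ∣ m)))
      ↔ ∀ p ∈ S, legSym p (m : ℤ) ≠ ε p ∧ ¬ p ^ 2 ∣ m := by
    intro m
    have himp : ∀ p : ℕ, (p ∣ m → ¬ p ^ 2 ∣ m) ↔ ¬ p ^ 2 ∣ m :=
      fun p => ⟨fun h hsq => h ((dvd_pow_self p two_ne_zero).trans hsq) hsq, fun h _ => h⟩
    constructor
    · rintro ⟨c1, c2⟩ p hp
      rcases Finset.mem_union.mp hp with h | h
      · have := c1 p h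
        rw [himp] at this
        rw [hε]; simpa [h] using this
      · have := c2 p h
        rw [himp] at this
        have hns : p ∉ S₁ := Finset.disjoint_right.mp hdisj h
        rw [hε]; simpa [hns] using this
    · intro h
      constructor
      · intro p hp
        have := h p (Finset.mem_union_left _ hp)
        rw [hε] at this
        simp only [if_pos hp] at this
        exact ⟨this.1, fun _ => this.2⟩
      · intro p hp
        have := h p (Finset.mem_union_right _ hp)
        have hns : p ∉ S₁ := Finset.disjoint_right.mp hdisj hp
        rw [hε] at this
        simp only [if_neg hns] at this
        exact ⟨this.1, fun _ => this.2⟩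
  -- transfer along congruences mod M
  have htrans : ∀ {a b : ℕ}, a ≡ b [MOD M] →
      (∀ p ∈ S, legSym p (a : ℤ) ≠ ε p ∧ ¬ p ^ 2 ∣ a) →
      (∀ p ∈ S, legSym p (b : ℤ) ≠ ε p ∧ ¬ p ^ 2 ∣ b) := by
    intro a b hab h p hp
    obtain ⟨hl, hd⟩ := h p hp
    have hmodp : a ≡ b [MOD p] :=
      (hab.of_dvd (hdvd p hp)).of_dvd (dvd_pow_self p two_ne_zero)
    refine ⟨by rwa [legSym_congr p hmodp] at hl, by rwa [sq_dvd_congr p (hdvd p hp) hab] at hd⟩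
  -- Step A : reduce to ZMod M
  set Q : ZMod M → Prop := fun x => ∀ p ∈ S, legSym p (x.val : ℤ) ≠ ε p ∧ ¬ p ^ 2 ∣ x.val with hQ
  have stepA : Nat.card {m : ℕ | 1 ≤ m ∧ m ≤ M ∧
        (∀ p ∈ S₁, legSym p (m : ℤ) ≠ 1 ∧ (p ∣ m → ¬ p ^ 2 ∣ m)) ∧
        (∀ p ∈ S₂, legSym p (m : ℤ) ≠ -1 ∧ (p ∣ m → ¬ p ^ 2 ∣ m))}
      = Nat.card {x : ZMod M // Q x} := by
    refine Eq.symm (Nat.card_congr ?_)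
    refine ⟨fun x => ⟨if x.1.val = 0 then M else x.1.val, ?_⟩,
      fun m => ⟨((m : ℕ) : ZMod M), ?_⟩, ?_, ?_⟩
    · -- membership
      obtain ⟨x, hx⟩ := x
      dsimp only
      have hvlt : x.val < M := ZMod.val_lt x
      have hcong : x.val ≡ (if x.val = 0 then M else x.val) [MOD M] := by
        split
        · next h => rw [h]; exact (Nat.modEq_zero_iff_dvd.mpr dvd_rfl).symm
        · rfl
      refine ⟨?_, ?_, (hPiff _).mpr (htrans hcong hx)⟩
      · split <;> omega
      · split <;> omega
    · -- membership backwards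
      obtain ⟨m, hm1, hm2, hm3⟩ := m
      dsimp only
      rw [hQ]
      have : (m : ZMod M).val ≡ m [MOD M] := by
        rw [ZMod.val_natCast]
        exact Nat.mod_modEq m M
      exact htrans this.symm ((hPiff m).mp hm3)
    · -- left inverse
      rintro ⟨x, hx⟩
      ext
      dsimp only
      split
      · next h =>
        rw [ZMod.natCast_self]
        exact ((ZMod.val_eq_zero x).mp h).symm
      · simp [ZMod.natCast_val, ZMod.cast_id]
    · -- right inverse
      rintro ⟨m, hm1, hm2, hm3⟩
      ext
      dsimp only
      simp only [ZMod.val_natCast]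
      have := hMpos
      split
      · next h =>
        obtain ⟨c, rfl⟩ := Nat.dvd_of_mod_eq_zero h
        have : c = 1 := by nlinarith
        simp [this]
      · next h =>
        have : m % M = m := by
          rcases Nat.lt_or_ge m M with h' | h'
          · exact Nat.mod_eq_of_lt h'
          · have : m = M := le_antisymm hm2 h'
            subst this
            simp at h
        exact this
  rw [stepA]
  -- Step B : CRT decomposition
  haveI instNZ : ∀ i : ↥S, NeZero ((i : ℕ) ^ 2) :=
    fun i => ⟨pow_ne_zero 2 (hP i i.2).1.pos.ne'⟩
  have hMeq : M = ∏ i : ↥S, (i : ℕ) ^ 2 := (Finset.prod_coe_sort S (fun p => p ^ 2)).symm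
  have cop : Pairwise fun i j : ↥S => Nat.Coprime ((i : ℕ) ^ 2) ((j : ℕ) ^ 2) := by
    intro i j hij
    exact ((Nat.coprime_primes (hP i i.2).1 (hP j j.2).1).mpr
      (fun h => hij (Subtype.ext h))).pow _ _
  let e : ZMod M ≃+* ∀ i : ↥S, ZMod ((i : ℕ) ^ 2) :=
    (ZMod.ringEquivCongr hMeq).trans (ZMod.prodEquivPi _ cop)
  have hcomp : ∀ (x : ZMod M) (i : ↥S), e x i = ((x.val : ℕ) : ZMod ((i : ℕ) ^ 2)) := by
    intro x i
    have h0 : (Pi.evalRingHom (fun i : ↥S => ZMod ((i : ℕ) ^ 2)) i).comp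
        (e : ZMod M →+* ∀ i : ↥S, ZMod ((i : ℕ) ^ 2))
        = ZMod.castHom (hdvd i i.2) (ZMod ((i : ℕ) ^ 2)) := RingHom.ext_zmod _ _
    calc e x i = ((Pi.evalRingHom (fun i : ↥S => ZMod ((i : ℕ) ^ 2)) i).comp
        (e : ZMod M →+* ∀ i : ↥S, ZMod ((i : ℕ) ^ 2))) x := rfl
      _ = ZMod.castHom (hdvd i i.2) (ZMod ((i : ℕ) ^ 2)) x := by rw [h0]
      _ = ((x.val : ℕ) : ZMod ((i : ℕ) ^ 2)) := by
          rw [ZMod.castHom_apply, ← ZMod.natCast_val]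
  set R : (i : ↥S) → ZMod ((i : ℕ) ^ 2) → Prop :=
    fun i y => legSym i (y.val : ℤ) ≠ ε i ∧ y ≠ 0 with hR
  have hcond : ∀ (x : ZMod M) (i : ↥S),
      R i (e x i) ↔ (legSym i ((x.val : ℕ) : ℤ) ≠ ε i ∧ ¬ (i : ℕ) ^ 2 ∣ x.val) := by
    intro x i
    rw [hR, hcomp x i]
    have hmod : x.val % (i : ℕ) ^ 2 ≡ x.val [MOD (i : ℕ)] :=
      (Nat.mod_modEq x.val ((i : ℕ) ^ 2)).of_dvd (dvd_pow_self _ two_ne_zero)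
    exact and_congr
      (by rw [ZMod.val_natCast, legSym_congr (i : ℕ) hmod])
      (not_congr (ZMod.natCast_eq_zero_iff _ _))
  have hQR : ∀ x : ZMod M, Q x ↔ ∀ i : ↥S, R i (e x i) := by
    intro x
    rw [hQ]
    constructor
    · intro h i
      exact (hcond x i).mpr (h i i.2)
    · intro h p hp
      exact (hcond x ⟨p, hp⟩).mp (h ⟨p, hp⟩)
  calc Nat.card {x : ZMod M // Q x}
      = Nat.card {f : ∀ i : ↥S, ZMod ((i : ℕ) ^ 2) // ∀ i, R i (f i)} :=
        Nat.card_congr (e.toEquiv.subtypeEquiv hQR)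
    _ = Nat.card (∀ i : ↥S, {y : ZMod ((i : ℕ) ^ 2) // R i y}) :=
        Nat.card_congr Equiv.subtypePiEquivPi
    _ = ∏ i : ↥S, Nat.card {y : ZMod ((i : ℕ) ^ 2) // R i y} := Nat.card_pi
    _ = ∏ i : ↥S, (((i : ℕ) - 1) * ((i : ℕ) + 2) / 2) := by
        refine Finset.prod_congr rfl fun i _ => ?_
        exact card_admissible_local i (hP i i.2).1 (hP i i.2).2 (ε i) (hεval i i.2)
    _ = ∏ p ∈ S, (p - 1) * (p + 2) / 2 := Finset.prod_coe_sort S (fun p => (p - 1) * (p + 2) / 2)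
end
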